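/- arXiv:1104.4446 — 4 statements merged into one kernel-verified Lean document; each statement's English description precedes it below -/
import Mathlib

section
/- Let R be a unital associative algebra over ℚ and let A₁, A₂, B₁, B₂ ∈ R be such that each commutator [A_a, B_b] (a, b = 1, 2) lies in the center of R. Then, with indices taken modulo 2 (so A₃ = A₁, B₃ = B₁), the commutator of anti-commutators satisfies (1/2)[(1/2){A₁,A₂}, (1/2){B₁,B₂}] = Σ_{a,b=1}^{2} (1/2)[A_a, B_b] · (1/2){A_{a+1}, B_{b+1}}; i.e. it is a sum of the four single-commutator terms. -/
/-! Both `⁅x, ·⁆` and `⁅·, w⁆` are derivations of `R`. When the commutators `⁅x, y⁆` and `⁅x, z⁆`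
are central, the two halves of `⁅x, y * z + z * y⁆` coincide, giving
`2 • (⁅x, y⁆ * z + ⁅x, z⁆ * y)`. Expanding `⁅p * q + q * p, w⁆` by the Leibniz rule, inserting this
and pulling the central factors to the front yields twice the sum of the four terms
`⁅A a, B b⁆ * {A (a + 1), B (b + 1)}`; the factors `1 / 2` only rescale both sides. -/

section

variable {R : Type*} [Ring R]

theorem lie_mul_add_mul_of_mem_center {x y z : R} (hy : ⁅x, y⁆ ∈ Set.center R)
    (hz : ⁅x, z⁆ ∈ Set.center R) :
    ⁅x, y * z + z * y⁆ = 2 • (⁅x, y⁆ * z + ⁅x, z⁆ * y) := by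
  have leibniz :
      ⁅x, y * z + z * y⁆ = ⁅x, y⁆ * z + y * ⁅x, z⁆ + (⁅x, z⁆ * y + z * ⁅x, y⁆) := by
    simp only [Ring.lie_def]; noncomm_ring
  rw [leibniz, Semigroup.mem_center_iff.mp hy z, Semigroup.mem_center_iff.mp hz y]
  abel

theorem lie_mul_add_mul_mul_add_mul_of_mem_center {p q r s : R}
    (hpr : ⁅p, r⁆ ∈ Set.center R) (hps : ⁅p, s⁆ ∈ Set.center R)
    (hqr : ⁅q, r⁆ ∈ Set.center R) (hqs : ⁅q, s⁆ ∈ Set.center R) :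
    ⁅p * q + q * p, r * s + s * r⁆ =
      2 • (⁅p, r⁆ * (q * s + s * q) + ⁅p, s⁆ * (q * r + r * q) +
        ⁅q, r⁆ * (p * s + s * p) + ⁅q, s⁆ * (p * r + r * p)) := by
  have leibniz : ⁅p * q + q * p, r * s + s * r⁆ =
      p * ⁅q, r * s + s * r⁆ + ⁅q, r * s + s * r⁆ * p +
        (q * ⁅p, r * s + s * r⁆ + ⁅p, r * s + s * r⁆ * q) := by
    simp only [Ring.lie_def]; noncomm_ring
  rw [leibniz, lie_mul_add_mul_of_mem_center hqr hqs, lie_mul_add_mul_of_mem_center hpr hps]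
  simp only [mul_add, add_mul, mul_smul_comm, smul_mul_assoc, smul_add, ← mul_assoc,
    Semigroup.mem_center_iff.mp hpr, Semigroup.mem_center_iff.mp hps,
    Semigroup.mem_center_iff.mp hqr, Semigroup.mem_center_iff.mp hqs]
  abel

end

/-- Wick's theorem for commutators and symmetrization, part (i):
if all commutators `[A a, B b]` are central ("c-numbers"), then the commutator of
anti-commutators is a sum of four single-commutator terms (indices mod 2 via `Fin 2`). -/
theorem wick_commutator_anticommutator {R : Type*} [Ring R] [Algebra ℚ R]
    (A B : Fin 2 → R)
    (hc : ∀ a b : Fin 2, A a * B b - B b * A a ∈ Set.center R) :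
    (1/2 : ℚ) •
      (((1/2 : ℚ) • (A 0 * A 1 + A 1 * A 0)) * ((1/2 : ℚ) • (B 0 * B 1 + B 1 * B 0)) -
       ((1/2 : ℚ) • (B 0 * B 1 + B 1 * B 0)) * ((1/2 : ℚ) • (A 0 * A 1 + A 1 * A 0))) =
    ∑ a : Fin 2, ∑ b : Fin 2,
      ((1/2 : ℚ) • (A a * B b - B b * A a)) *
        ((1/2 : ℚ) • (A (a + 1) * B (b + 1) + B (b + 1) * A (a + 1))) := by
  have key : (A 0 * A 1 + A 1 * A 0) * (B 0 * B 1 + B 1 * B 0) -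
      (B 0 * B 1 + B 1 * B 0) * (A 0 * A 1 + A 1 * A 0) = _ :=
    lie_mul_add_mul_mul_add_mul_of_mem_center (hc 0 0) (hc 0 1) (hc 1 0) (hc 1 1)
  simp only [Fin.sum_univ_two, smul_mul_smul_comm, ← smul_sub, key, zero_add, Fin.reduceAdd]
  module
end

section
/- Let A be a unital associative algebra over ℝ, let d ∈ ℕ, let ħ, κ ∈ ℝ, and let α : Fin d → ℤ → A satisfy [α^i_m, α^j_n] = ħ·m·κ^{|m|}·δ_{m+n,0}·δ^{ij}·1 for all i, j ∈ Fin d and m, n ∈ ℤ. For indices i₁, i₂, i₃, i₄ ∈ Fin d and mode numbers n₁, n₂, n₃, n₄ ∈ ℤ, define the normal-ordered quartic product :α^{i₁}_{n₁} α^{i₂}_{n₂} α^{i₃}_{n₃} α^{i₄}_{n₄}: as the product of the four factors taken in any order in which every factor with strictly negative mode number stands to the left of every factor with nonnegative mode number (this is well defined since any two factors whose mode numbers do not sum to zero commute). Then the 4-symmetrizer satisfies (1/24){α^{i₁}_{n₁}, α^{i₂}_{n₂}, α^{i₃}_{n₃}, α^{i₄}_{n₄}} = :α^{i₁}_{n₁}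 α^{i₂}_{n₂} α^{i₃}_{n₃} α^{i₄}_{n₄}: + (6/24)·Σ_{π∈S₄} c^{i_{π(1)} i_{π(2)}}_{n_{π(1)} n_{π(2)}} · :α^{i_{π(3)}}_{n_{π(3)}} α^{i_{π(4)}}_{n_{π(4)}}: + (3/24)·Σ_{π∈S₄} c^{i_{π(1)} i_{π(2)}}_{n_{π(1)} n_{π(2)}} · c^{i_{π(3)} i_{π(4)}}_{n_{π(3)} n_{π(4)}} · 1, where c^{ij}_{mn} := (ħ/2)·|m|·κ^{|m|}·δ_{m+n,0}·δ^{ij}. -/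
/-- The Heaviside step function on integers, with `θ 0 = 1/2`. -/
noncomputable def heaviside (x : ℤ) : ℝ :=
  if 0 < x then 1 else if x = 0 then 1/2 else 0

/-- The single contraction `c^{ij}_{mn} = (ħ/2)·|m|·κ^{|m|}·δ_{m+n,0}·δ^{ij}`. -/
noncomputable def contraction {d : ℕ} (hbar κ : ℝ) (i j : Fin d) (m n : ℤ) : ℝ :=
  (hbar / 2) * (m.natAbs : ℝ) * κ ^ m.natAbs *
    (if m + n = 0 then 1 else 0) * (if i = j then 1 else 0)

/-- The normal-ordered pair `:α^i_m α^j_n: = θ(n−m)·α^i_m α^j_n + θ(m−n)·α^j_n α^i_m`. -/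
noncomputable def normalPair {A : Type*} [Ring A] [Algebra ℝ A] {d : ℕ}
    (α : Fin d → ℤ → A) (i j : Fin d) (m n : ℤ) : A :=
  heaviside (n - m) • (α i m * α j n) + heaviside (m - n) • (α j n * α i m)

/-- The normal-ordered quartic product of four oscillator modes with indices
`I : Fin 4 → Fin d` and mode numbers `N : Fin 4 → ℤ`: all factors with strictly
negative mode number stand to the left of all factors with nonnegative mode number
(within each group the original order is kept; any order within the groups gives
the same element, since factors whose mode numbers do not sum to zero commute). -/
noncomputable def normalQuartic {A : Type*} [Ring A] [Algebra ℝ A] {d : ℕ}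
    (α : Fin d → ℤ → A) (I : Fin 4 → Fin d) (N : Fin 4 → ℤ) : A :=
  (((List.finRange 4).filter fun k => decide (N k < 0)).map fun k => α (I k) (N k)).prod *
  (((List.finRange 4).filter fun k => decide (0 ≤ N k)).map fun k => α (I k) (N k)).prod

/-! Every term is unchanged when the four modes are permuted simultaneously: the three sums by
reindexing over `Perm (Fin 4)`, and the normal-ordered product because two modes of the same sign
commute. So we may assume the mode numbers increase, when the normal-ordered product is the
ordered product `a₀a₁a₂a₃`. All commutators are central scalars, so each of the 24 words
bubble-sorts into `a₀a₁a₂a₃` plus scalar multiples of ordered pairs and of `1`; for `m ≤ n` the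
contraction `c_{mn}` is `-½[α_m, α_n]` and the normal-ordered pair is `α_m α_n`, and comparing
coefficients gives the identity. -/

open Equiv

theorem sum_perm_fin_succ {M : Type*} [AddCommMonoid M] {n : ℕ} (f : Perm (Fin (n + 1)) → M) :
    ∑ π, f π = ∑ p, ∑ e : Perm (Fin n), f (Perm.decomposeFin.symm (p, e)) := by
  rw [← Fintype.sum_prod_type', Equiv.sum_comp Perm.decomposeFin.symm f]

theorem sum_perm_fin_four {M : Type*} [AddCommMonoid M] (F : Fin 4 → Fin 4 → Fin 4 → Fin 4 → M) :
    ∑ π : Perm (Fin 4), F (π 0) (π 1) (π 2) (π 3) =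
      F 0 1 2 3 + F 0 1 3 2 + F 0 2 1 3 + F 0 2 3 1 + F 0 3 1 2 + F 0 3 2 1 +
      F 1 0 2 3 + F 1 0 3 2 + F 1 2 0 3 + F 1 2 3 0 + F 1 3 0 2 + F 1 3 2 0 +
      F 2 0 1 3 + F 2 0 3 1 + F 2 1 0 3 + F 2 1 3 0 + F 2 3 0 1 + F 2 3 1 0 +
      F 3 0 1 2 + F 3 0 2 1 + F 3 1 0 2 + F 3 1 2 0 + F 3 2 0 1 + F 3 2 1 0 := by
  rw [show (1 : Fin 4) = Fin.succ 0 from rfl, show (2 : Fin 4) = Fin.succ (Fin.succ 0) from rfl,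
    show (3 : Fin 4) = Fin.succ (Fin.succ (Fin.succ 0)) from rfl]
  simp only [sum_perm_fin_succ, Perm.decomposeFin_symm_apply_zero,
    Perm.decomposeFin_symm_apply_succ, Fin.sum_univ_succ, Finset.univ_unique, Finset.sum_singleton]
  simp only [Fin.reduceSucc, Perm.default_eq, Perm.coe_one, id_eq, Fin.default_eq_zero,
    swap_apply_def, Fin.reduceEq, ↓reduceIte]
  abel

theorem List.filter_append_filter_not {ι : Type*} {p : ι → Bool} {l : List ι}
    (hl : l.Pairwise fun x y => p y → p x) : l.filter p ++ l.filter (fun x => !p x) = l := by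
  induction l with
  | nil => rfl
  | cons x xs ih =>
    rw [List.pairwise_cons] at hl
    by_cases hx : p x
    · simp [hx, ih hl.2]
    · have hxs : ∀ y ∈ xs, ¬p y := fun y hy hpy => hx (hl.1 y hy hpy)
      rw [List.filter_cons_of_neg hx, List.filter_eq_nil_iff.mpr hxs, List.nil_append,
        List.filter_eq_self.mpr (by simpa [hx] using hxs)]

theorem List.prod_map_filter_eq_of_perm {ι M : Type*} [Monoid M] {l l' : List ι} (hl : l.Perm l')
    (p : ι → Bool) (f : ι → M) (hf : ∀ x y, p x → p y → Commute (f x) (f y)) :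
    ((l.filter p).map f).prod = ((l'.filter p).map f).prod :=
  ((hl.filter p).map f).prod_eq' <| List.pairwise_of_forall_mem_list <| by
    simp only [List.mem_map, List.mem_filter]
    rintro _ ⟨x, ⟨-, hx⟩, rfl⟩ _ ⟨y, ⟨-, hy⟩, rfl⟩
    exact hf x y hx hy

section CentralCommutators

variable {A : Type*} [Ring A] [Algebra ℝ A]

theorem mul_mul_eq_mul_mul_sub_of_commutator {x y : A} {r : ℝ} (h : x * y - y * x = r • 1)
    (t : A) : y * (x * t) = x * (y * t) - r • t := by
  rw [← mul_assoc, ← mul_assoc, eq_sub_iff_add_eq', ← eq_sub_iff_add_eq, ← sub_mul, h,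
    smul_one_mul]

def sortedPair {n : ℕ} (a : Fin n → A) (k l : Fin n) : A :=
  if k ≤ l then a k * a l else a l * a k

noncomputable def sortedContraction {n : ℕ} (c : Fin n → Fin n → ℝ) (k l : Fin n) : ℝ :=
  -(1 / 2) * if k ≤ l then c k l else c l k

theorem symmetrize_four_eq_of_commutator (a : Fin 4 → A) (c : Fin 4 → Fin 4 → ℝ)
    (hc : ∀ k l, k < l → a k * a l - a l * a k = c k l • 1) :
    (1 / 24 : ℝ) • (∑ π : Perm (Fin 4), (List.ofFn fun k => a (π k)).prod) =
      (List.ofFn a).prod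
      + (6 / 24 : ℝ) • (∑ π : Perm (Fin 4),
          sortedContraction c (π 0) (π 1) • sortedPair a (π 2) (π 3))
      + (3 / 24 : ℝ) • (∑ π : Perm (Fin 4),
          (sortedContraction c (π 0) (π 1) * sortedContraction c (π 2) (π 3)) • (1 : A)) := by
  have swap_mul : ∀ k l, k < l → ∀ t, a l * (a k * t) = a k * (a l * t) - c k l • t :=
    fun k l hkl => mul_mul_eq_mul_mul_sub_of_commutator (hc k l hkl)
  have swap_pair : ∀ k l, k < l → a l * a k = a k * a l - c k l • 1 := fun k l hkl => by
    simpa using swap_mul k l hkl 1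
  simp only [List.ofFn_succ, List.ofFn_zero, List.prod_cons, List.prod_nil, mul_one,
    Fin.succ_zero_eq_one, Fin.succ_one_eq_two, Fin.reduceSucc]
  rw [sum_perm_fin_four fun i j k l => a i * (a j * (a k * a l)),
    sum_perm_fin_four fun i j k l => sortedContraction c i j • sortedPair a k l,
    sum_perm_fin_four fun i j k l => (sortedContraction c i j * sortedContraction c k l) • (1 : A)]
  simp only [sortedPair, sortedContraction, Fin.isValue, Fin.reduceLE, if_true, if_false]
  -- bubble-sort every word; `Fin.reduceLT` discharges the side conditions `k < l`
  simp only [swap_mul, swap_pair, Fin.reduceLT, mul_sub, mul_smul_comm, smul_sub, mul_one]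
  module

end CentralCommutators

noncomputable def oscillatorBracket {d : ℕ} (hbar κ : ℝ) (i j : Fin d) (m n : ℤ) : ℝ :=
  hbar * (m : ℝ) * κ ^ m.natAbs * (if m + n = 0 then 1 else 0) * (if i = j then 1 else 0)

def OscillatorRelations {A : Type*} [Ring A] [Algebra ℝ A] {d : ℕ} (hbar κ : ℝ)
    (α : Fin d → ℤ → A) : Prop :=
  ∀ i j m n, α i m * α j n - α j n * α i m = oscillatorBracket hbar κ i j m n • (1 : A)

section Oscillators

variable {d : ℕ} (hbar κ : ℝ) {i j : Fin d} {m n : ℤ}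

theorem oscillatorBracket_eq_zero (h : m < 0 ↔ n < 0) : oscillatorBracket hbar κ i j m n = 0 := by
  by_cases hmn : m + n = 0
  · simp [oscillatorBracket, show m = 0 by omega]
  · simp [oscillatorBracket, hmn]

theorem contraction_comm : contraction hbar κ i j m n = contraction hbar κ j i n m := by
  by_cases hmn : m + n = 0
  · simp only [contraction, hmn, show n + m = 0 by omega, show n.natAbs = m.natAbs by omega,
      eq_comm (a := i)]
  · simp [contraction, hmn, show n + m ≠ 0 by omega]

theorem contraction_eq_of_le (h : m ≤ n) :
    contraction hbar κ i j m n = -(1 / 2) * oscillatorBracket hbar κ i j m n := by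
  by_cases hmn : m + n = 0
  · have : (m.natAbs : ℝ) = -m := by
      rw [Nat.cast_natAbs, Int.cast_abs, abs_of_nonpos (by exact_mod_cast (by omega : m ≤ 0))]
    simp only [contraction, oscillatorBracket, hmn, this]
    ring
  · simp [contraction, oscillatorBracket, hmn]

variable {A : Type*} [Ring A] [Algebra ℝ A] {α : Fin d → ℤ → A}

theorem OscillatorRelations.commute (hα : OscillatorRelations hbar κ α) (h : m < 0 ↔ n < 0) :
    Commute (α i m) (α j n) :=
  sub_eq_zero.mp <| by rw [hα, oscillatorBracket_eq_zero hbar κ h, zero_smul]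

theorem normalPair_comm : normalPair α i j m n = normalPair α j i n m := by
  rw [normalPair, normalPair, add_comm]

theorem normalPair_eq_of_le (hα : OscillatorRelations hbar κ α) (h : m ≤ n) :
    normalPair α i j m n = α i m * α j n := by
  rcases h.lt_or_eq with h | rfl
  · simp [normalPair, heaviside, h, not_lt.mpr h.le, show m - n ≠ 0 by omega]
  · rw [normalPair, (hα.commute hbar κ Iff.rfl).eq, ← add_smul]
    norm_num [heaviside]

theorem normalQuartic_comp_perm (hα : OscillatorRelations hbar κ α)
    (I : Fin 4 → Fin d) (N : Fin 4 → ℤ) (σ : Perm (Fin 4)) :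
    normalQuartic α (I ∘ σ) (N ∘ σ) = normalQuartic α I N := by
  have reindex : ∀ p : ℤ → Bool,
      ((List.finRange 4).filter fun k => p ((N ∘ σ) k)).map (fun k => α ((I ∘ σ) k) ((N ∘ σ) k)) =
        (((List.finRange 4).map σ).filter fun k => p (N k)).map fun k => α (I k) (N k) := by
    intro p
    rw [List.filter_map, List.map_map]
    rfl
  rw [normalQuartic, reindex fun n => decide (n < 0), reindex fun n => decide (0 ≤ n)]
  congr 1 <;> refine List.prod_map_filter_eq_of_perm σ.map_finRange_perm _ _ fun x y hx hy => ?_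
    <;> refine hα.commute hbar κ ?_
    <;> simp only [decide_eq_true_eq] at hx hy
    <;> omega

theorem normalQuartic_eq_prod_of_monotone (I : Fin 4 → Fin d) {N : Fin 4 → ℤ} (hN : Monotone N) :
    normalQuartic α I N = (List.ofFn fun k => α (I k) (N k)).prod := by
  have hsplit := List.filter_append_filter_not (p := fun k => decide (N k < 0))
    (l := List.finRange 4) <| (List.pairwise_le_finRange 4).imp fun hkl hl => by
      simpa using (hN hkl).trans_lt (by simpa using hl)
  simp only [← decide_not, not_lt] at hsplit
  rw [normalQuartic, ← List.prod_append, ← List.map_append, hsplit, List.ofFn_eq_map]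

theorem symmetrize_four_eq_of_monotone (hα : OscillatorRelations hbar κ α)
    (I : Fin 4 → Fin d) {N : Fin 4 → ℤ} (hN : Monotone N) :
    (1/24 : ℝ) • (∑ π : Equiv.Perm (Fin 4), (List.ofFn fun k => α (I (π k)) (N (π k))).prod) =
      normalQuartic α I N
      + (6/24 : ℝ) • (∑ π : Equiv.Perm (Fin 4),
          contraction hbar κ (I (π 0)) (I (π 1)) (N (π 0)) (N (π 1)) •
            normalPair α (I (π 2)) (I (π 3)) (N (π 2)) (N (π 3)))
      + (3/24 : ℝ) • (∑ π : Equiv.Perm (Fin 4),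
          (contraction hbar κ (I (π 0)) (I (π 1)) (N (π 0)) (N (π 1)) *
           contraction hbar κ (I (π 2)) (I (π 3)) (N (π 2)) (N (π 3))) • (1 : A)) := by
  let c : Fin 4 → Fin 4 → ℝ := fun k l => oscillatorBracket hbar κ (I k) (I l) (N k) (N l)
  have hcontraction : ∀ k l,
      contraction hbar κ (I k) (I l) (N k) (N l) = sortedContraction c k l := by
    intro k l
    rw [sortedContraction]
    split_ifs with hkl
    · exact contraction_eq_of_le hbar κ (hN hkl)
    · rw [contraction_comm, contraction_eq_of_le hbar κ (hN (le_of_not_ge hkl))]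
  have hpair : ∀ k l,
      normalPair α (I k) (I l) (N k) (N l) = sortedPair (fun k => α (I k) (N k)) k l := by
    intro k l
    rw [sortedPair]
    split_ifs with hkl
    · exact normalPair_eq_of_le hbar κ hα (hN hkl)
    · rw [normalPair_comm, normalPair_eq_of_le hbar κ hα (hN (le_of_not_ge hkl))]
  simp only [normalQuartic_eq_prod_of_monotone I hN, hcontraction, hpair]
  exact symmetrize_four_eq_of_commutator _ c fun k l _ => hα _ _ _ _

end Oscillators

/-- Wick's theorem for symmetrization and normal order, part (ii): given oscillator
modes with `[α^i_m, α^j_n] = ħ·m·κ^{|m|}·δ_{m+n,0}·δ^{ij}·1`, the 4-symmetrizer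
`(1/24){α^{i₁}_{n₁}, α^{i₂}_{n₂}, α^{i₃}_{n₃}, α^{i₄}_{n₄}}` equals the normal-ordered
quartic product, plus the 6 single-contraction terms, plus the 3 double-contraction
terms (each packaged as a sum over all permutations of `Fin 4` with the appropriate
combinatorial prefactor). -/
theorem wick_four_symmetrizer_normal_order {A : Type*} [Ring A] [Algebra ℝ A]
    {d : ℕ} (hbar κ : ℝ) (α : Fin d → ℤ → A)
    (hcomm : ∀ (i j : Fin d) (m n : ℤ),
      α i m * α j n - α j n * α i m =
        (hbar * (m : ℝ) * κ ^ m.natAbs *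
          (if m + n = 0 then (1 : ℝ) else 0) * (if i = j then (1 : ℝ) else 0)) • (1 : A))
    (I : Fin 4 → Fin d) (N : Fin 4 → ℤ) :
    (1/24 : ℝ) • (∑ π : Equiv.Perm (Fin 4), (List.ofFn fun k => α (I (π k)) (N (π k))).prod) =
      normalQuartic α I N
      + (6/24 : ℝ) • (∑ π : Equiv.Perm (Fin 4),
          contraction hbar κ (I (π 0)) (I (π 1)) (N (π 0)) (N (π 1)) •
            normalPair α (I (π 2)) (I (π 3)) (N (π 2)) (N (π 3)))
      + (3/24 : ℝ) • (∑ π : Equiv.Perm (Fin 4),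
          (contraction hbar κ (I (π 0)) (I (π 1)) (N (π 0)) (N (π 1)) *
           contraction hbar κ (I (π 2)) (I (π 3)) (N (π 2)) (N (π 3))) • (1 : A)) := by
  have hα : OscillatorRelations hbar κ α := hcomm
  obtain ⟨σ, hσ⟩ : ∃ σ : Perm (Fin 4), Monotone (N ∘ σ) := ⟨_, Tuple.monotone_sort N⟩
  have sorted := symmetrize_four_eq_of_monotone hbar κ hα (I ∘ σ) hσ
  rw [normalQuartic_comp_perm hbar κ hα] at sorted
  have reindex : ∀ f : Perm (Fin 4) → A, ∑ π, f π = ∑ π, f (σ * π) :=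
    fun f => (Equiv.sum_comp (Equiv.mulLeft σ) f).symm
  convert sorted using 2
  · exact reindex _
  · congr 2
    exact reindex _
  · congr 1
    exact reindex _
end

section
/- For every real number κ with |κ| < 1 and every integer m ∈ ℤ, the family (k ↦ k·|m−k|·κ^{|k|+|m−k|}) indexed by k ∈ ℤ is summable and its sum A_m := Σ_{k∈ℤ} k·|m−k|·κ^{|k|+|m−k|} equals (m(m²−1)/6)·κ^{|m|}. In particular, the κ-power series A_m is a monomial in κ of degree |m|. -/
/-! Pair the term at `k` with the term at `m - k`, for `m ≥ 0`. Outside `[0, m]` the numbers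
`k` and `m - k` have opposite signs and the two terms cancel; inside, both carry `κ ^ m`, so
`2 A_m = 2 κ ^ m ∑_{k=0}^{m} k (m - k) = m (m² - 1) / 3 · κ ^ m`. For `m < 0`, the substitution
`k ↦ -k` turns `A_m` into `-A_{-m}`. -/

open Finset

theorem sum_range_succ_mul_sub (n : ℕ) :
    ∑ j ∈ range (n + 1), (j : ℝ) * (n - j) = n * (n ^ 2 - 1) / 6 := by
  induction n with
  | zero => simp
  | succ n ih =>
    have gauss : ∑ j ∈ range (n + 1), (j : ℝ) = n * (n + 1) / 2 := by
      have h := sum_range_id_mul_two (n + 1)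
      rw [Nat.add_sub_cancel] at h
      have h' := congrArg (Nat.cast : ℕ → ℝ) h
      push_cast at h'
      linarith
    rw [sum_range_succ]
    push_cast
    simp_rw [show ∀ j : ℝ, j * (n + 1 - j) = j * (n - j) + j by intro j; ring]
    rw [sum_add_distrib, ih, gauss]
    ring

theorem summable_natAbs_pow_mul_geometric {r : ℝ} (hr : |r| < 1) (p : ℕ) :
    Summable fun k : ℤ => (k.natAbs : ℝ) ^ p * r ^ k.natAbs := by
  have hnat : Summable fun n : ℕ => (n : ℝ) ^ p * r ^ n :=
    summable_pow_mul_geometric_of_norm_lt_one p hr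
  exact .of_nat_of_neg (by simpa using hnat) (by simpa using hnat)

def anomalyTerm (κ : ℝ) (m k : ℤ) : ℝ :=
  k * (m - k).natAbs * κ ^ (k.natAbs + (m - k).natAbs)

theorem abs_anomalyTerm_le (κ : ℝ) (hκ : |κ| ≤ 1) (m k : ℤ) :
    |anomalyTerm κ m k| ≤
      (k.natAbs : ℝ) ^ 2 * |κ| ^ k.natAbs + m.natAbs * ((k.natAbs : ℝ) ^ 1 * |κ| ^ k.natAbs) := by
  have hdist : ((m - k).natAbs : ℝ) ≤ k.natAbs + m.natAbs := by
    exact_mod_cast (by omega : (m - k).natAbs ≤ k.natAbs + m.natAbs)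
  have hpow : |κ| ^ (k.natAbs + (m - k).natAbs) ≤ |κ| ^ k.natAbs :=
    pow_le_pow_of_le_one (abs_nonneg κ) hκ (Nat.le_add_right _ _)
  calc |anomalyTerm κ m k|
      = (k.natAbs : ℝ) * (m - k).natAbs * |κ| ^ (k.natAbs + (m - k).natAbs) := by
        rw [anomalyTerm, abs_mul, abs_mul, abs_pow, Nat.abs_cast, Nat.cast_natAbs k, Int.cast_abs]
    _ ≤ (k.natAbs : ℝ) * (k.natAbs + m.natAbs) * |κ| ^ k.natAbs := by gcongr
    _ = _ := by ring

theorem summable_anomalyTerm {κ : ℝ} (hκ : |κ| < 1) (m : ℤ) : Summable (anomalyTerm κ m) := by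
  have hκ' : |(|κ|)| < 1 := by rwa [abs_abs]
  exact .of_norm_bounded ((summable_natAbs_pow_mul_geometric hκ' 2).add
    ((summable_natAbs_pow_mul_geometric hκ' 1).mul_left _)) (abs_anomalyTerm_le κ hκ.le m)

theorem anomalyTerm_neg_neg (κ : ℝ) (m k : ℤ) : anomalyTerm κ (-m) (-k) = -anomalyTerm κ m k := by
  simp only [anomalyTerm, show -m - -k = -(m - k) by ring, Int.natAbs_neg, Int.cast_neg]
  ring

theorem anomalyTerm_add_anomalyTerm_sub_of_le (κ : ℝ) (n : ℕ) {k : ℤ} (h₀ : 0 ≤ k)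
    (hk : k ≤ n) : anomalyTerm κ n k + anomalyTerm κ n (n - k) = 2 * (k * (n - k)) * κ ^ n := by
  have hexp : k.natAbs + (n - k).natAbs = n := by omega
  simp only [anomalyTerm, sub_sub_cancel, add_comm (n - k).natAbs, hexp, Nat.cast_natAbs,
    abs_of_nonneg h₀, abs_of_nonneg (sub_nonneg.mpr hk)]
  push_cast
  ring

theorem anomalyTerm_add_anomalyTerm_sub_eq_zero (κ : ℝ) (n : ℕ) {k : ℤ} (hk : k < 0 ∨ n < k) :
    anomalyTerm κ n k + anomalyTerm κ n (n - k) = 0 := by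
  simp only [anomalyTerm, sub_sub_cancel, add_comm (n - k).natAbs, Nat.cast_natAbs]
  rcases hk with hk | hk
  · rw [abs_of_neg hk, abs_of_nonneg (by omega : (0 : ℤ) ≤ n - k)]
    push_cast
    ring
  · rw [abs_of_nonneg (by omega : (0 : ℤ) ≤ k), abs_of_neg (by omega : (n : ℤ) - k < 0)]
    push_cast
    ring

theorem hasSum_anomalyTerm_natCast {κ : ℝ} (hκ : |κ| < 1) (n : ℕ) :
    HasSum (anomalyTerm κ n) (n * ((n : ℝ) ^ 2 - 1) / 6 * κ ^ n) := by
  set s : Finset ℤ := (range (n + 1)).map Nat.castEmbedding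
  have mem_s : ∀ k, k ∈ s ↔ 0 ≤ k ∧ k ≤ n := by
    intro k
    simp only [s, mem_map, mem_range, Nat.castEmbedding_apply]
    exact ⟨by rintro ⟨j, hj, rfl⟩; omega, fun hk => ⟨k.toNat, by omega, by omega⟩⟩
  have hf := (summable_anomalyTerm hκ n).hasSum
  have hrefl : HasSum (fun k => anomalyTerm κ n (n - k)) (∑' k, anomalyTerm κ n k) :=
    (Equiv.subLeft (n : ℤ)).hasSum_iff (f := anomalyTerm κ n) |>.mpr hf
  have hsym : HasSum (fun k => anomalyTerm κ n k + anomalyTerm κ n (n - k))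
      (∑ k ∈ s, (anomalyTerm κ n k + anomalyTerm κ n (n - k))) :=
    hasSum_sum_of_ne_finset_zero fun k hk =>
      anomalyTerm_add_anomalyTerm_sub_eq_zero κ n (by rw [mem_s] at hk; omega)
  have hfinite : ∑ k ∈ s, (anomalyTerm κ n k + anomalyTerm κ n (n - k))
      = n * ((n : ℝ) ^ 2 - 1) / 3 * κ ^ n := by
    rw [sum_map]
    simp only [Nat.castEmbedding_apply]
    rw [sum_congr rfl fun j hj => anomalyTerm_add_anomalyTerm_sub_of_le κ n (Nat.cast_nonneg j)
      (by simp at hj; omega)]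
    simp only [Int.cast_natCast]
    rw [← sum_mul, ← mul_sum, sum_range_succ_mul_sub]
    ring
  have htwice := (hf.add hrefl).unique hsym
  rwa [show n * ((n : ℝ) ^ 2 - 1) / 6 * κ ^ n = ∑' k, anomalyTerm κ n k by linarith]

theorem hasSum_anomalyTerm {κ : ℝ} (hκ : |κ| < 1) (m : ℤ) :
    HasSum (anomalyTerm κ m) (m * ((m : ℝ) ^ 2 - 1) / 6 * κ ^ m.natAbs) := by
  obtain ⟨n, rfl | rfl⟩ := Int.eq_nat_or_neg m
  · simpa using hasSum_anomalyTerm_natCast hκ n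
  · have h : HasSum (fun k => -anomalyTerm κ n (-k)) (-(n * ((n : ℝ) ^ 2 - 1) / 6 * κ ^ n)) :=
      (Equiv.neg ℤ).hasSum_iff (f := fun k => -anomalyTerm κ n k) |>.mpr
        (hasSum_anomalyTerm_natCast hκ n).neg
    have hfun : anomalyTerm κ (-n) = fun k => -anomalyTerm κ n (-k) := by
      ext k
      simpa using anomalyTerm_neg_neg κ n (-k)
    rw [hfun]
    convert h using 1
    push_cast
    rw [Int.natAbs_neg, Int.natAbs_natCast]
    ring

/-- For `|κ| < 1` and any `m ∈ ℤ`, the anomaly family `k ↦ k·|m−k|·κ^{|k|+|m−k|}`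
over `k ∈ ℤ` is summable, and its sum `A_m` equals the monomial
`(m(m²−1)/6)·κ^{|m|}`. -/
theorem virasoro_anomaly_sum (κ : ℝ) (hκ : |κ| < 1) (m : ℤ) :
    Summable (fun k : ℤ => (k : ℝ) * ((m - k).natAbs : ℝ) * κ ^ (k.natAbs + (m - k).natAbs)) ∧
      ∑' k : ℤ, (k : ℝ) * ((m - k).natAbs : ℝ) * κ ^ (k.natAbs + (m - k).natAbs) =
        (m : ℝ) * ((m : ℝ) ^ 2 - 1) / 6 * κ ^ m.natAbs :=
  ⟨(hasSum_anomalyTerm hκ m).summable, (hasSum_anomalyTerm hκ m).tsum_eq⟩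
end

section
/- For every real number κ with |κ| < 1 and every integer m ∈ ℤ, the family (k ↦ sgn(k)·κ^{|k|+|m−k|}) indexed by k ∈ ℤ is summable and its sum B_m := Σ_{k∈ℤ} sgn(k)·κ^{|k|+|m−k|} equals m·κ^{|m|}. In particular, the κ-power series B_m is a monomial in κ of degree |m|. -/
/-!
Pair the term at `k` with the term at `m - k`. The exponents agree, so the pair contributes
`(sgn k + sgn (m - k)) κ^(|k| + |m - k|)`. The sign sum vanishes unless `k` lies between `0`
and `m`, where `|k| + |m - k| = |m|`; hence twice the series is `κ^|m|` times the finite sum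
`∑_{k ∈ [[0, m]]} (sgn k + sgn (m - k)) = 2m`.
-/

open Finset

lemma summable_pow_natAbs {r : ℝ} (h₀ : 0 ≤ r) (h₁ : r < 1) :
    Summable fun k : ℤ => r ^ k.natAbs :=
  Summable.of_nat_of_neg (by simpa using summable_geometric_of_lt_one h₀ h₁)
    (by simpa using summable_geometric_of_lt_one h₀ h₁)

lemma summable_sign_mul_pow_natAbs_add {κ : ℝ} (hκ : |κ| < 1) (m : ℤ) :
    Summable fun k : ℤ => (k.sign : ℝ) * κ ^ (k.natAbs + (m - k).natAbs) := by
  refine (summable_pow_natAbs (abs_nonneg κ) hκ).of_norm_bounded fun k => ?_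
  have hsign : |(k.sign : ℝ)| ≤ 1 := by
    rcases k.sign_trichotomy with h | h | h <;> simp [h]
  calc ‖(k.sign : ℝ) * κ ^ (k.natAbs + (m - k).natAbs)‖
      = |(k.sign : ℝ)| * |κ| ^ (k.natAbs + (m - k).natAbs) := by
        rw [norm_mul, norm_pow, Real.norm_eq_abs, Real.norm_eq_abs]
    _ ≤ 1 * |κ| ^ k.natAbs :=
        mul_le_mul hsign (pow_le_pow_of_le_one (abs_nonneg κ) hκ.le (Nat.le_add_right _ _))
          (by positivity) zero_le_one
    _ = |κ| ^ k.natAbs := one_mul _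

lemma sign_add_sign_mul_pow_natAbs_add {R : Type*} [Ring R] (a b : ℤ) (x : R) :
    ((a.sign + b.sign : ℤ) : R) * x ^ (a.natAbs + b.natAbs) =
      ((a.sign + b.sign : ℤ) : R) * x ^ (a + b).natAbs := by
  by_cases h : a.sign + b.sign = 0
  · simp [h]
  have hsame : ¬(a < 0 ∧ 0 < b) ∧ ¬(0 < a ∧ b < 0) := by
    constructor <;> rintro ⟨ha, hb⟩ <;>
      simp [Int.sign_eq_neg_one_of_neg, Int.sign_eq_one_of_pos, ha, hb] at h
  congr 2
  omega

lemma sum_uIcc_zero_sign (m : ℤ) : ∑ k ∈ uIcc 0 m, k.sign = m := by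
  rcases le_total 0 m with hm | hm
  · rw [uIcc_of_le hm, Icc_eq_cons_Ioc hm, sum_cons, Int.sign_zero, zero_add,
      sum_congr rfl fun k hk => Int.sign_eq_one_of_pos (mem_Ioc.mp hk).1, sum_const,
      nsmul_one, Int.card_Ioc_of_le _ _ hm, sub_zero]
  · rw [uIcc_of_ge hm, Icc_eq_cons_Ico hm, sum_cons, Int.sign_zero, zero_add,
      sum_congr rfl fun k hk => Int.sign_eq_neg_one_of_neg (mem_Ico.mp hk).2, sum_const,
      smul_neg, nsmul_one, Int.card_Ico_of_le _ _ hm, zero_sub, neg_neg]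

lemma sum_uIcc_zero_sign_sub (m : ℤ) : ∑ k ∈ uIcc 0 m, (m - k).sign = m := by
  refine (sum_equiv (Equiv.subLeft m) (fun k => ?_) (fun k _ => rfl)).trans (sum_uIcc_zero_sign m)
  simp only [mem_uIcc, Equiv.subLeft_apply]
  omega

lemma sign_add_sign_sub_eq_zero {m k : ℤ} (hk : k ∉ uIcc 0 m) : k.sign + (m - k).sign = 0 := by
  simp only [mem_uIcc, not_and_or, not_le] at hk
  rcases (by omega : (k < 0 ∧ 0 < m - k) ∨ (0 < k ∧ m - k < 0)) with ⟨h₁, h₂⟩ | ⟨h₁, h₂⟩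
  · rw [Int.sign_eq_neg_one_of_neg h₁, Int.sign_eq_one_of_pos h₂, neg_add_cancel]
  · rw [Int.sign_eq_one_of_pos h₁, Int.sign_eq_neg_one_of_neg h₂, add_neg_cancel]

lemma tsum_sign_add_sign_sub_mul_pow {R : Type*} [CommRing R] [TopologicalSpace R] (m : ℤ)
    (x : R) :
    ∑' k : ℤ, ((k.sign + (m - k).sign : ℤ) : R) * x ^ (k.natAbs + (m - k).natAbs) =
      2 * m * x ^ m.natAbs := by
  simp_rw [sign_add_sign_mul_pow_natAbs_add, add_sub_cancel]
  rw [tsum_eq_sum (s := uIcc 0 m) fun k hk => by simp [sign_add_sign_sub_eq_zero hk],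
    ← sum_mul, ← Int.cast_sum, sum_add_distrib, sum_uIcc_zero_sign, sum_uIcc_zero_sign_sub]
  push_cast; ring

lemma tsum_add_comp_sub_left {α : Type*} [AddCommMonoid α] [TopologicalSpace α] [ContinuousAdd α]
    [T2Space α] {f : ℤ → α} (hf : Summable f) (m : ℤ) :
    ∑' k, (f k + f (m - k)) = 2 • ∑' k, f k := by
  have hf' : Summable fun k => f (m - k) := (Equiv.subLeft m).summable_iff.mpr hf
  rw [hf.tsum_add hf', two_nsmul]
  exact congrArg _ ((Equiv.subLeft m).tsum_eq f)

/-- For `|κ| < 1` and any `m ∈ ℤ`, the family `k ↦ sgn(k)·κ^{|k|+|m−k|}` over `k ∈ ℤ`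
is summable, and its sum `B_m` equals the monomial `m·κ^{|m|}`. -/
theorem sign_sum_monomial (κ : ℝ) (hκ : |κ| < 1) (m : ℤ) :
    Summable (fun k : ℤ => (k.sign : ℝ) * κ ^ (k.natAbs + (m - k).natAbs)) ∧
      ∑' k : ℤ, (k.sign : ℝ) * κ ^ (k.natAbs + (m - k).natAbs) = (m : ℝ) * κ ^ m.natAbs := by
  have hf := summable_sign_mul_pow_natAbs_add hκ m
  refine ⟨hf, ?_⟩
  have hpair : ∀ k : ℤ, (k.sign : ℝ) * κ ^ (k.natAbs + (m - k).natAbs) +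
      ((m - k).sign : ℝ) * κ ^ ((m - k).natAbs + (m - (m - k)).natAbs) =
      ((k.sign + (m - k).sign : ℤ) : ℝ) * κ ^ (k.natAbs + (m - k).natAbs) := fun k => by
    rw [sub_sub_cancel, Nat.add_comm (m - k).natAbs]
    push_cast; ring
  have key := tsum_add_comp_sub_left hf m
  rw [tsum_congr hpair, tsum_sign_add_sign_sub_mul_pow, two_nsmul] at key
  linarith
end
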